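/- The assignment S ↦ E_S is a bijection from the collection of subsets S ⊆ {2, …, n} with ∑_{i ∈ S} w_i > 1 onto the collection of nonempty 1-connected flats of the graphic matroid M(w) of the reduced weight graph G(w). -/

import Mathlib

open Finset

/-- The reduced weight graph `G(w)`: vertices are `{2, …, n}` (as natural numbers),
and distinct `i, j ∈ {2, …, n}` are adjacent iff `w i + w j > 1`. -/
def redGraph (n : ℕ) (w : ℕ → ℚ) : SimpleGraph ℕ where
  Adj i j := i ≠ j ∧ (2 ≤ i ∧ i ≤ n) ∧ (2 ≤ j ∧ j ≤ n) ∧ 1 < w i + w j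
  symm := by
    constructor
    intro i j h
    exact ⟨h.1.symm, h.2.2.1, h.2.1, by rw [add_comm]; exact h.2.2.2⟩
  loopless := by constructor; intro i h; exact h.1 rfl

/-- `E_S`: the set of edges of `G(w)` with both endpoints in `S`. -/
def edgesIn (n : ℕ) (w : ℕ → ℚ) (S : Set ℕ) : Set (Sym2 ℕ) :=
  {e ∈ (redGraph n w).edgeSet | ∀ v ∈ e, v ∈ S}

/-- A set `F` of edges of `G(w)` is a *flat* of the graphic matroid `M(w)` if for
every edge `{u, v}` of `G(w)` not in `F`, the vertices `u` and `v` are not joined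
by a walk using only edges of `F`. -/
def IsFlat (n : ℕ) (w : ℕ → ℚ) (F : Set (Sym2 ℕ)) : Prop :=
  F ⊆ (redGraph n w).edgeSet ∧
    ∀ u v : ℕ, (redGraph n w).Adj u v → s(u, v) ∉ F →
      ¬ (SimpleGraph.fromEdgeSet F).Reachable u v

/-- The set of endpoints of edges in `F`. -/
def edgeSupport (F : Set (Sym2 ℕ)) : Set ℕ := {v | ∃ e ∈ F, v ∈ e}

/-- A flat `F` is *1-connected* if the subgraph of `G(w)` with edge set `F` and
vertex set the endpoints of edges of `F` is connected. -/
def OneConnected (F : Set (Sym2 ℕ)) : Prop :=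
  ((SimpleGraph.fromEdgeSet F).induce (edgeSupport F)).Connected

/-!
A heavy vertex is adjacent to every other vertex of `G(w)`, and the light vertices of
`{2, …, n}` have total weight `(n - m) ε < 1`. So `∑_{i ∈ S} w_i > 1` forces `S` to contain a
heavy vertex and some other vertex, and then `E_S` is a connected spanning subgraph of `S`
(it contains the star at the heavy vertex); hence `E_S` recovers `S` as its set of endpoints.
Conversely, a flat that is connected on its endpoints `S` contains every edge of `G(w)` inside
`S`, so it equals `E_S`, and any one of its edges already gives `∑_{i ∈ S} w_i > 1`.
-/

open SimpleGraph

section RedGraph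

variable {n : ℕ} {w : ℕ → ℚ}

@[simp]
lemma mk_mem_edgesIn {S : Set ℕ} {u v : ℕ} :
    s(u, v) ∈ edgesIn n w S ↔ (redGraph n w).Adj u v ∧ u ∈ S ∧ v ∈ S := by
  simp [edgesIn]

lemma edgeSupport_subset_Icc {F : Set (Sym2 ℕ)} (hF : F ⊆ (redGraph n w).edgeSet) :
    edgeSupport F ⊆ Set.Icc 2 n := by
  rintro v ⟨e, he, hv⟩
  induction e using Sym2.ind with
  | _ a b =>
    have hab : (redGraph n w).Adj a b := hF he
    rcases Sym2.mem_iff.mp hv with rfl | rfl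
    exacts [hab.2.1, hab.2.2.1]

lemma mem_edgeSupport_of_reachable {F : Set (Sym2 ℕ)} {u v : ℕ} (huv : u ≠ v)
    (h : (fromEdgeSet F).Reachable u v) : u ∈ edgeSupport F := by
  obtain ⟨p⟩ := h
  cases p with
  | nil => exact absurd rfl huv
  | cons hadj _ => exact ⟨_, ((fromEdgeSet_adj _).mp hadj).1, Sym2.mem_mk_left _ _⟩

lemma isFlat_edgesIn (S : Set ℕ) : IsFlat n w (edgesIn n w S) := by
  refine ⟨fun e he => he.1, fun u v huv huvS hreach => huvS ?_⟩
  have hsupp {x y : ℕ} (hxy : x ≠ y) (h : (fromEdgeSet (edgesIn n w S)).Reachable x y) :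
      x ∈ S := by
    obtain ⟨e, he, hx⟩ := mem_edgeSupport_of_reachable hxy h
    exact he.2 x hx
  exact mk_mem_edgesIn.mpr ⟨huv, hsupp huv.1 hreach, hsupp huv.1.symm hreach.symm⟩

lemma edgeSupport_edgesIn {S : Set ℕ} (h : ∀ v ∈ S, ∃ u ∈ S, (redGraph n w).Adj v u) :
    edgeSupport (edgesIn n w S) = S := by
  refine Set.Subset.antisymm (fun v ⟨e, he, hv⟩ => he.2 v hv) fun v hv => ?_
  obtain ⟨u, hu, hvu⟩ := h v hv
  exact ⟨s(v, u), mk_mem_edgesIn.mpr ⟨hvu, hv, hu⟩, Sym2.mem_mk_left _ _⟩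

lemma edgeSupport_edgesIn_of_hub {S : Set ℕ} {c : ℕ} (hc : c ∈ S)
    (hadj : ∀ v ∈ S, v ≠ c → (redGraph n w).Adj v c) (hS : ∃ v ∈ S, v ≠ c) :
    edgeSupport (edgesIn n w S) = S := by
  refine edgeSupport_edgesIn fun v hv => ?_
  by_cases hvc : v = c
  · obtain ⟨u, hu, huc⟩ := hS
    exact ⟨u, hu, hvc ▸ (hadj u hu huc).symm⟩
  · exact ⟨c, hc, hadj v hv hvc⟩

lemma oneConnected_edgesIn_of_hub {S : Set ℕ} {c : ℕ} (hc : c ∈ S)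
    (hadj : ∀ v ∈ S, v ≠ c → (redGraph n w).Adj v c) (hS : ∃ v ∈ S, v ≠ c) :
    OneConnected (edgesIn n w S) := by
  rw [OneConnected, edgeSupport_edgesIn_of_hub hc hadj hS,
    connected_iff_exists_forall_reachable]
  refine ⟨⟨c, hc⟩, fun ⟨v, hv⟩ => ?_⟩
  by_cases hvc : v = c
  · subst hvc; rfl
  · have hvc' : ((fromEdgeSet (edgesIn n w S)).induce S).Adj ⟨v, hv⟩ ⟨c, hc⟩ :=
      (fromEdgeSet_adj _).mpr ⟨mk_mem_edgesIn.mpr ⟨hadj v hv hvc, hv, hc⟩, hvc⟩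
    exact hvc'.reachable.symm

lemma edgesIn_edgeSupport {F : Set (Sym2 ℕ)} (hF : IsFlat n w F) (hconn : OneConnected F) :
    edgesIn n w (edgeSupport F) = F := by
  refine Set.Subset.antisymm ?_ fun e he => ⟨hF.1 he, fun v hv => ⟨e, he, hv⟩⟩
  rintro e ⟨he, hsupp⟩
  induction e using Sym2.ind with
  | _ u v =>
    by_contra huvF
    have hreach := hconn.preconnected ⟨u, hsupp u (Sym2.mem_mk_left _ _)⟩
      ⟨v, hsupp v (Sym2.mem_mk_right _ _)⟩
    exact hF.2 u v he huvF (hreach.map (Embedding.induce _).toHom)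

lemma one_lt_sum_of_adj {S : Finset ℕ} (hw0 : ∀ i ∈ S, 0 ≤ w i) {a b : ℕ}
    (hab : (redGraph n w).Adj a b) (ha : a ∈ S) (hb : b ∈ S) : 1 < ∑ i ∈ S, w i :=
  calc 1 < w a + w b := hab.2.2.2
    _ = ∑ i ∈ {a, b}, w i := (sum_pair hab.1).symm
    _ ≤ ∑ i ∈ S, w i :=
      sum_le_sum_of_subset_of_nonneg (by simp [insert_subset_iff, ha, hb]) fun i hi _ => hw0 i hi

lemma exists_finset_edgesIn_eq {F : Set (Sym2 ℕ)} (hw0 : ∀ i ∈ Icc 2 n, 0 ≤ w i)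
    (hne : F.Nonempty) (hF : IsFlat n w F) (hconn : OneConnected F) :
    ∃ S : Finset ℕ, (S ⊆ Icc 2 n ∧ 1 < ∑ i ∈ S, w i) ∧ edgesIn n w ↑S = F := by
  have hsub := edgeSupport_subset_Icc hF.1
  have hfin := (Set.finite_Icc 2 n).subset hsub
  have hmem {i : ℕ} : i ∈ hfin.toFinset ↔ i ∈ edgeSupport F := hfin.mem_toFinset
  have hS : hfin.toFinset ⊆ Icc 2 n := fun i hi => by simpa using hsub (hmem.mp hi)
  obtain ⟨e, he⟩ := hne
  induction e using Sym2.ind with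
  | _ a b =>
    refine ⟨hfin.toFinset, ⟨hS, one_lt_sum_of_adj (fun i hi => hw0 i (hS hi)) (hF.1 he)
      (hmem.mpr ⟨_, he, Sym2.mem_mk_left _ _⟩) (hmem.mpr ⟨_, he, Sym2.mem_mk_right _ _⟩)⟩, ?_⟩
    rw [Set.Finite.coe_toFinset]
    exact edgesIn_edgeSupport hF hconn

end RedGraph

section HeavyLight

variable {n m : ℕ} {ε : ℚ} {w : ℕ → ℚ}

lemma weight_pos (hε0 : 0 < ε) (hw : ∀ i, 1 ≤ i → i ≤ n → w i = if i ≤ m then 1 else ε)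
    {i : ℕ} (hi : i ∈ Icc 2 n) : 0 < w i := by
  obtain ⟨h2, hn⟩ := mem_Icc.mp hi
  rw [hw i (by omega) hn]
  split_ifs
  exacts [one_pos, hε0]

lemma exists_heavy_mem (hmn : m < n) (hε0 : 0 < ε) (hε1 : ε < 1 / ((n : ℚ) - m))
    (hw : ∀ i, 1 ≤ i → i ≤ n → w i = if i ≤ m then 1 else ε)
    {S : Finset ℕ} (hS : S ⊆ Icc 2 n) (hsum : 1 < ∑ i ∈ S, w i) : ∃ c ∈ S, c ≤ m := by
  by_contra! hlight
  have hsub : S ⊆ Icc (m + 1) n := fun i hi => mem_Icc.mpr ⟨hlight i hi, (mem_Icc.mp (hS hi)).2⟩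
  have hwS : ∀ i ∈ S, w i = ε := fun i hi => by
    obtain ⟨hmi, hin⟩ := mem_Icc.mp (hsub hi)
    rw [hw i (by omega) hin, if_neg (by omega)]
  have hcard : (#S : ℚ) ≤ n - m := by
    rw [← Nat.cast_sub hmn.le, Nat.cast_le]
    simpa using card_le_card hsub
  have hnm : (0 : ℚ) < n - m := sub_pos.mpr (by exact_mod_cast hmn)
  have hlight_total : (n - m : ℚ) * ε < 1 := by
    rw [mul_comm]
    exact (lt_div_iff₀ hnm).mp hε1
  have : ∑ i ∈ S, w i ≤ (n - m : ℚ) * ε := by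
    rw [sum_congr rfl hwS, sum_const, nsmul_eq_mul]
    exact mul_le_mul_of_nonneg_right hcard hε0.le
  linarith

lemma exists_ne_mem_of_one_lt_sum {S : Finset ℕ} {c : ℕ} (hc : c ∈ S) (hwc : w c = 1)
    (hsum : 1 < ∑ i ∈ S, w i) : ∃ v ∈ S, v ≠ c := by
  by_contra! h
  rw [eq_singleton_iff_unique_mem.mpr ⟨hc, h⟩, sum_singleton, hwc] at hsum
  exact lt_irrefl _ hsum

lemma exists_hub_of_one_lt_sum (hmn : m < n) (hε0 : 0 < ε) (hε1 : ε < 1 / ((n : ℚ) - m))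
    (hw : ∀ i, 1 ≤ i → i ≤ n → w i = if i ≤ m then 1 else ε)
    {S : Finset ℕ} (hS : S ⊆ Icc 2 n) (hsum : 1 < ∑ i ∈ S, w i) :
    ∃ c ∈ S, (∀ v ∈ S, v ≠ c → (redGraph n w).Adj v c) ∧ ∃ v ∈ S, v ≠ c := by
  obtain ⟨c, hc, hcm⟩ := exists_heavy_mem hmn hε0 hε1 hw hS hsum
  have hcI := mem_Icc.mp (hS hc)
  have hwc : w c = 1 := (hw c (by omega) hcI.2).trans (if_pos hcm)
  refine ⟨c, hc, fun v hv hvc => ?_, exists_ne_mem_of_one_lt_sum hc hwc hsum⟩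
  have hwv := weight_pos hε0 hw (hS hv)
  exact ⟨hvc, mem_Icc.mp (hS hv), hcI, by linarith⟩

end HeavyLight

theorem bijOn_edgesIn_general (n m : ℕ) (ε : ℚ) (hmn : m < n)
    (hε0 : 0 < ε) (hε1 : ε < 1 / ((n : ℚ) - m))
    (w : ℕ → ℚ) (hw : ∀ i, 1 ≤ i → i ≤ n → w i = if i ≤ m then 1 else ε) :
    Set.BijOn (fun S : Finset ℕ => edgesIn n w (↑S : Set ℕ))
      {S : Finset ℕ | S ⊆ Finset.Icc 2 n ∧ 1 < ∑ i ∈ S, w i}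
      {F : Set (Sym2 ℕ) | F.Nonempty ∧ IsFlat n w F ∧ OneConnected F} := by
  have hub := @exists_hub_of_one_lt_sum n m ε w hmn hε0 hε1 hw
  refine ⟨?_, ?_, ?_⟩
  · rintro S ⟨hS, hsum⟩
    obtain ⟨c, hc, hadj, v, hv, hvc⟩ := hub hS hsum
    exact ⟨⟨s(v, c), mk_mem_edgesIn.mpr ⟨hadj v hv hvc, hv, hc⟩⟩, isFlat_edgesIn _,
      oneConnected_edgesIn_of_hub hc hadj ⟨v, hv, hvc⟩⟩
  · have hsupp {S : Finset ℕ} (hS : S ⊆ Icc 2 n) (hsum : 1 < ∑ i ∈ S, w i) :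
        edgeSupport (edgesIn n w ↑S) = ↑S := by
      obtain ⟨c, hc, hadj, hne⟩ := hub hS hsum
      exact edgeSupport_edgesIn_of_hub hc hadj hne
    rintro S₁ ⟨hS₁, hsum₁⟩ S₂ ⟨hS₂, hsum₂⟩ heq
    rw [← coe_inj, ← hsupp hS₁ hsum₁, ← hsupp hS₂ hsum₂]
    exact congrArg edgeSupport heq
  · rintro F ⟨hne, hF, hconn⟩
    exact exists_finset_edgesIn_eq (fun i hi => (weight_pos hε0 hw hi).le) hne hF hconn

/-- The assignment `S ↦ E_S` is a bijection from the collection of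
subsets `S ⊆ {2, …, n}` with `∑_{i ∈ S} w i > 1` onto the collection of nonempty
1-connected flats of the graphic matroid `M(w)`. -/
theorem bijOn_edgesIn (n m : ℕ) (ε : ℚ) (hm : 2 ≤ m) (hmn : m < n) (hn : 4 ≤ n)
    (hε0 : 0 < ε) (hε1 : ε < 1 / ((n : ℚ) - m))
    (w : ℕ → ℚ) (hw : ∀ i, 1 ≤ i → i ≤ n → w i = if i ≤ m then 1 else ε) :
    Set.BijOn (fun S : Finset ℕ => edgesIn n w (↑S : Set ℕ))
      {S : Finset ℕ | S ⊆ Finset.Icc 2 n ∧ 1 < ∑ i ∈ S, w i}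
      {F : Set (Sym2 ℕ) | F.Nonempty ∧ IsFlat n w F ∧ OneConnected F} :=
  bijOn_edgesIn_general n m ε hmn hε0 hε1 w hw
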